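/- Let Y be a δ-hyperbolic horoball with bounded parabolic action by P and let D be the synchronous fellow-traveling constant. There is a constant F = 4 + 20δ + D, independent of basepoint, such that for any geodesic ray c based at y₀ tending to the boundary point and any p, p' ∈ P, if t₀ is the minimum value with d(pc(t₀), p'c(t₀)) ≤ D, then |d(p(y₀), p'(y₀)) − 2t₀| ≤ F. -/

import Mathlib

open Metric Set

/-- The Gromov product `(y|z)_x`. -/
noncomputable def gromovProd {X : Type*} [MetricSpace X] (x y z : X) : ℝ :=
  (dist x y + dist x z - dist y z) / 2

/-- A unit-speed geodesic from `x` to `y`, defined on `[0, dist x y]`. -/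
def IsGeodesicSeg {X : Type*} [MetricSpace X] (f : ℝ → X) (x y : X) : Prop :=
  f 0 = x ∧ f (dist x y) = y ∧
    ∀ s ∈ Set.Icc (0:ℝ) (dist x y), ∀ t ∈ Set.Icc (0:ℝ) (dist x y),
      dist (f s) (f t) = |s - t|

/-- A geodesic metric space: any two points are joined by a geodesic. -/
def GeodesicSpace (X : Type*) [MetricSpace X] : Prop :=
  ∀ x y : X, ∃ f : ℝ → X, IsGeodesicSeg f x y

/-- A unit-speed geodesic ray, defined on `[0, ∞)`. -/
def IsGeodesicRay {X : Type*} [MetricSpace X] (c : ℝ → X) : Prop :=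
  ∀ s ∈ Set.Ici (0:ℝ), ∀ t ∈ Set.Ici (0:ℝ), dist (c s) (c t) = |s - t|

/-- Two geodesic rays are asymptotic if one stays at bounded distance from the other. -/
def AsympRays {X : Type*} [MetricSpace X] (c c' : ℝ → X) : Prop :=
  ∃ K : ℝ, ∀ t, 0 ≤ t → ∃ s, 0 ≤ s ∧ dist (c t) (c' s) ≤ K

/-- δ-hyperbolicity in the "equiradial" sense: on a geodesic triangle with vertices
`x,y,z`, points on the sides `[x,y]` and `[x,z]` that are equidistant from `x`, at distance
at most the Gromov product `(y|z)_x`, are at distance at most δ. -/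
def GromovThin (X : Type*) [MetricSpace X] (δ : ℝ) : Prop :=
  ∀ (x y z : X) (f g : ℝ → X), IsGeodesicSeg f x y → IsGeodesicSeg g x z →
    ∀ s : ℝ, 0 ≤ s → s ≤ gromovProd x y z → dist (f s) (g s) ≤ δ

/-- δ-thin triangles: each side of a geodesic triangle lies in the closed δ-neighborhood
of the union of the other two sides. -/
def ThinTriangles (X : Type*) [MetricSpace X] (δ : ℝ) : Prop :=
  ∀ (x y z : X) (fxy fyz fxz : ℝ → X),
    IsGeodesicSeg fxy x y → IsGeodesicSeg fyz y z → IsGeodesicSeg fxz x z →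
    ∀ p ∈ fxy '' Set.Icc (0:ℝ) (dist x y),
      ∃ q ∈ (fyz '' Set.Icc (0:ℝ) (dist y z)) ∪ (fxz '' Set.Icc (0:ℝ) (dist x z)),
        dist p q ≤ δ

/-!
The upper bound is the triangle inequality through `p c(t₀)` and `p' c(t₀)`. For the lower
bound take `t = t₀ - 1`: the rays `p c`, `p' c` are more than `D`-apart at time `t`, so by the
choice of `D` neither `p c(t)` nor `p' c(t)` is `5δ`-close to the other ray, and thinness of the
ideal triangle puts both within `5δ` of the segment `[p y₀, p' y₀]`. Projecting to that segment
gives `2t ≤ d(p y₀, p' y₀) + 20δ + d(p c(t), p' c(t))`, and the last term is at most `D + 2`.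
-/

lemma IsGeodesicSeg.dist_left {X : Type*} [MetricSpace X] {f : ℝ → X} {x y : X}
    (hf : IsGeodesicSeg f x y) {s : ℝ} (hs : s ∈ Icc 0 (dist x y)) : dist x (f s) = s := by
  obtain ⟨hf0, -, hf⟩ := hf
  rw [← hf0, hf 0 ⟨le_rfl, dist_nonneg⟩ s hs, zero_sub, abs_neg, abs_of_nonneg hs.1]

lemma IsGeodesicSeg.dist_right {X : Type*} [MetricSpace X] {f : ℝ → X} {x y : X}
    (hf : IsGeodesicSeg f x y) {s : ℝ} (hs : s ∈ Icc 0 (dist x y)) :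
    dist (f s) y = dist x y - s := by
  obtain ⟨-, hfd, hf⟩ := hf
  conv_lhs => rw [← hfd]
  rw [hf s hs _ ⟨dist_nonneg, le_rfl⟩, abs_of_nonpos (by linarith [hs.2]), neg_sub]

lemma IsGeodesicSeg.symm {X : Type*} [MetricSpace X] {f : ℝ → X} {x y : X}
    (hf : IsGeodesicSeg f x y) : IsGeodesicSeg (fun s => f (dist x y - s)) y x := by
  obtain ⟨hf0, hfd, hf⟩ := hf
  have hyx : dist y x = dist x y := dist_comm y x
  refine ⟨by simpa using hfd, by simpa [hyx] using hf0, fun s hs u hu => ?_⟩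
  rw [hyx] at hs hu
  rw [hf _ ⟨by linarith [hs.2], by linarith [hs.1]⟩ _ ⟨by linarith [hu.2], by linarith [hu.1]⟩,
    ← abs_neg]
  ring_nf

lemma IsGeodesicSeg.dist_add_dist_le {X : Type*} [MetricSpace X] {f : ℝ → X} {x y : X}
    (hf : IsGeodesicSeg f x y) {a b : X} {k s₁ s₂ : ℝ} (hs₁ : s₁ ∈ Icc 0 (dist x y))
    (hs₂ : s₂ ∈ Icc 0 (dist x y)) (ha : dist a (f s₁) ≤ k) (hb : dist b (f s₂) ≤ k) :
    dist x a + dist y b ≤ dist x y + 4 * k + dist a b := by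
  have hxa := dist_triangle x (f s₁) a
  have hyb := dist_triangle y (f s₂) b
  have hab := dist_triangle4 (f s₁) a b (f s₂)
  rw [hf.dist_left hs₁] at hxa
  rw [dist_comm y (f s₂), hf.dist_right hs₂] at hyb
  rw [hf.2.2 s₁ hs₁ s₂ hs₂, dist_comm (f s₁)] at hab
  linarith [le_abs_self (s₁ - s₂), dist_comm b (f s₂), dist_comm a (f s₁)]

lemma IsGeodesicRay.dist_zero {X : Type*} [MetricSpace X] {c : ℝ → X} (hc : IsGeodesicRay c)
    {t : ℝ} (ht : 0 ≤ t) : dist (c 0) (c t) = t := by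
  rw [hc 0 self_mem_Ici t ht, zero_sub, abs_neg, abs_of_nonneg ht]

lemma IsGeodesicRay.dist_le_dist_add {X : Type*} [MetricSpace X] {c₁ c₂ : ℝ → X}
    (hc₁ : IsGeodesicRay c₁) (hc₂ : IsGeodesicRay c₂) {s t : ℝ} (hs : 0 ≤ s) (ht : 0 ≤ t) :
    dist (c₁ s) (c₂ s) ≤ dist (c₁ t) (c₂ t) + 2 * |s - t| := by
  have h := dist_triangle4 (c₁ s) (c₁ t) (c₂ t) (c₂ s)
  rw [hc₁ s hs t ht, hc₂ t ht s hs, abs_sub_comm t s] at h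
  linarith

lemma IsGeodesicRay.smul {X M : Type*} [MetricSpace X] [SMul M X] [IsIsometricSMul M X]
    {c : ℝ → X} (hc : IsGeodesicRay c) (g : M) : IsGeodesicRay (fun t => g • c t) :=
  fun s hs t ht => (dist_smul g _ _).trans (hc s hs t ht)

section IsometricAction

variable {X G : Type*} [MetricSpace X] [Group G] [MulAction G X] [IsIsometricSMul G X]

lemma dist_smul_smul_eq_dist_inv_mul_smul (a b : G) (x y : X) :
    dist (a • x) (b • y) = dist x ((a⁻¹ * b) • y) := by
  rw [← dist_smul a⁻¹, inv_smul_smul, mul_smul]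

lemma dist_smul_le_of_exists_dist_smul_le {c : ℝ → X} {k D : ℝ}
    (hft : ∀ (g : G) (t : ℝ), 0 ≤ t →
      (∃ s, 0 ≤ s ∧ dist (c t) (g • c s) ≤ k) → dist (c t) (g • c t) ≤ D)
    (a b : G) {t : ℝ} (ht : 0 ≤ t) (h : ∃ s, 0 ≤ s ∧ dist (a • c t) (b • c s) ≤ k) :
    dist (a • c t) (b • c t) ≤ D := by
  simp only [dist_smul_smul_eq_dist_inv_mul_smul a b] at h ⊢
  exact hft _ t ht h

end IsometricAction

theorem stmt_18_general {Y P : Type*} [MetricSpace Y] [Group P] [MulAction P Y]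
    (δ D : ℝ) (hδ : 0 ≤ δ)
    (hgeo : GeodesicSpace Y)
    (hiso : ∀ (p : P) (a b : Y), dist (p • a) (p • b) = dist a b)
    (c : ℝ → Y)
    -- ideal triangles are 5δ-thin:
    (hThin : ∀ (c₁ c₂ f : ℝ → Y), IsGeodesicRay c₁ → IsGeodesicRay c₂ →
      IsGeodesicSeg f (c₁ 0) (c₂ 0) → ∀ t, 0 ≤ t →
        (∃ s, 0 ≤ s ∧ dist (c₁ t) (c₂ s) ≤ 5 * δ) ∨
        (∃ s ∈ Set.Icc (0:ℝ) (dist (c₁ 0) (c₂ 0)), dist (c₁ t) (f s) ≤ 5 * δ))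
    -- `D` is the asynchronous-to-synchronous fellow-traveling constant:
    (hDft : ∀ c' : ℝ → Y, IsGeodesicRay c' → ∀ (p : P) (t : ℝ), 0 ≤ t →
      (∃ s, 0 ≤ s ∧ dist (c' t) (p • c' s) ≤ 5 * δ) → dist (c' t) (p • c' t) ≤ D)
    (hc : IsGeodesicRay c) (y₀ : Y) (hc0 : c 0 = y₀)
    (p p' : P) (t₀ : ℝ)
    (ht₀ : IsLeast {t : ℝ | 0 ≤ t ∧ dist (p • c t) (p' • c t) ≤ D} t₀) :
    |dist (p • y₀) (p' • y₀) - 2 * t₀| ≤ 4 + 20 * δ + D := by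
  have : IsIsometricSMul P Y := ⟨fun g => Isometry.of_dist_eq (hiso g)⟩
  obtain ⟨⟨ht₀, hD₀⟩, ht₀_min⟩ := ht₀
  subst hc0
  have hpc := hc.smul p
  have hp'c := hc.smul p'
  have hsync := dist_smul_le_of_exists_dist_smul_le (hDft c hc)
  have hmove := fun t ht => hpc.dist_le_dist_add hp'c (s := t) ht ht₀
  beta_reduce at hmove
  rw [abs_le]
  refine ⟨?_, by
    linarith [hmove 0 le_rfl, abs_of_nonpos (show 0 - t₀ ≤ 0 by linarith)]⟩
  by_cases ht₀_small : t₀ < 1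
  · linarith [dist_nonneg (x := p • c 0) (y := p' • c 0),
      dist_nonneg (x := p • c t₀) (y := p' • c t₀)]
  set t := t₀ - 1
  have ht : 0 ≤ t := by linarith
  have hfar : D < dist (p • c t) (p' • c t) :=
    lt_of_not_ge fun h => by linarith [ht₀_min ⟨ht, h⟩]
  obtain ⟨f, hf⟩ := hgeo (p • c 0) (p' • c 0)
  obtain ⟨s₁, hs₁, h₁⟩ := (hThin _ _ f hpc hp'c hf t ht).resolve_left
    fun h => hfar.not_ge (hsync p p' ht h)
  obtain ⟨s₂, hs₂, h₂⟩ := (hThin _ _ _ hp'c hpc hf.symm t ht).resolve_left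
    fun h => hfar.not_ge (dist_comm (p • c t) _ ▸ hsync p' p ht h)
  rw [dist_comm (p' • c 0)] at hs₂
  have hproj := hf.dist_add_dist_le hs₁ ⟨by linarith [hs₂.2], by linarith [hs₂.1]⟩ h₁ h₂
  rw [hpc.dist_zero ht, hp'c.dist_zero ht] at hproj
  linarith [hmove t ht, abs_of_nonpos (show t - t₀ ≤ 0 by linarith)]

/-- With `t₀` the minimal time at which the rays `p c` and `p' c` come `D`-close,
`d(p y₀, p' y₀)` equals `2 t₀` up to the additive error `F = 4 + 20δ + D`. -/
theorem stmt_18 {Y P : Type*} [MetricSpace Y] [ProperSpace Y] [Group P] [MulAction P Y]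
    (δ D : ℝ) (hδ : 0 ≤ δ) (hD : 0 ≤ D)
    (hgeo : GeodesicSpace Y)
    (hiso : ∀ (p : P) (a b : Y), dist (p • a) (p • b) = dist a b)
    -- the Gromov boundary of `Y` is a single point: all rays are asymptotic
    (hone : ∀ c₁ c₂ : ℝ → Y, IsGeodesicRay c₁ → IsGeodesicRay c₂ → AsympRays c₁ c₂)
    (c : ℝ → Y)
    -- the action is bounded parabolic with respect to the ray `c`:
    (hbp : ∃ K : ℝ, ∀ y : Y, ∃ (p : P) (t : ℝ), 0 ≤ t ∧ dist y (p • c t) ≤ K)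
    -- ideal triangles are 5δ-thin:
    (hThin : ∀ (c₁ c₂ f : ℝ → Y), IsGeodesicRay c₁ → IsGeodesicRay c₂ →
      IsGeodesicSeg f (c₁ 0) (c₂ 0) → ∀ t, 0 ≤ t →
        (∃ s, 0 ≤ s ∧ dist (c₁ t) (c₂ s) ≤ 5 * δ) ∨
        (∃ s ∈ Set.Icc (0:ℝ) (dist (c₁ 0) (c₂ 0)), dist (c₁ t) (f s) ≤ 5 * δ))
    -- `D` is the asynchronous-to-synchronous fellow-traveling constant:
    (hDft : ∀ c' : ℝ → Y, IsGeodesicRay c' → ∀ (p : P) (t : ℝ), 0 ≤ t →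
      (∃ s, 0 ≤ s ∧ dist (c' t) (p • c' s) ≤ 5 * δ) → dist (c' t) (p • c' t) ≤ D)
    (hc : IsGeodesicRay c) (y₀ : Y) (hc0 : c 0 = y₀)
    (p p' : P) (t₀ : ℝ)
    (ht₀ : IsLeast {t : ℝ | 0 ≤ t ∧ dist (p • c t) (p' • c t) ≤ D} t₀) :
    |dist (p • y₀) (p' • y₀) - 2 * t₀| ≤ 4 + 20 * δ + D :=
  stmt_18_general δ D hδ hgeo hiso c hThin hDft hc y₀ hc0 p p' t₀ ht₀
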